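/- arXiv:0705.2268 — 2 statements merged into one kernel-verified Lean document; each statement's English description precedes it below -/
import Mathlib

section
/- Every positive polynomial (a polynomial that is nonnegative and not identically zero) on ℝⁿ belongs to RH_∞. -/
open MeasureTheory Metric MvPolynomial
open scoped Pointwise

/-!
Polynomials of degree at most `d` form a finite-dimensional space on which `Q ↦ ∫_B |Q|`, over
the unit ball `B`, is a norm: a polynomial vanishing a.e. on an open set vanishes identically.
All norms on a finite-dimensional space are equivalent, so `sup_B |Q| ≤ C ∫_B |Q|` with `C`
depending only on `n` and `d`. The substitutions `x ↦ c + r • x` preserve the degree and carry `B`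
onto `ball c r`, so for nonnegative `P` this reads `P ≤ C · vol B · ⨍_{ball c r} P`.
-/

theorem LinearMap.exists_norm_le_mul_norm_of_injective {𝕜 V F G : Type*}
    [NontriviallyNormedField 𝕜] [CompleteSpace 𝕜] [AddCommGroup V] [Module 𝕜 V]
    [FiniteDimensional 𝕜 V] [NormedAddCommGroup F] [NormedSpace 𝕜 F]
    [NormedAddCommGroup G] [NormedSpace 𝕜 G] (S : V →ₗ[𝕜] F) (T : V →ₗ[𝕜] G)
    (hT : Function.Injective T) : ∃ C > 0, ∀ v, ‖S v‖ ≤ C * ‖T v‖ := by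
  let e := LinearEquiv.ofInjective T hT
  obtain ⟨C, hC, hSC⟩ := LinearMap.toContinuousLinearMap (S ∘ₗ e.symm.toLinearMap) |>.bound
  exact ⟨C, hC, fun v => by simpa [e] using hSC (e v)⟩

theorem Metric.measureReal_ball_pos {X : Type*} [PseudoMetricSpace X] [ProperSpace X]
    [MeasurableSpace X] (μ : Measure X) [μ.IsOpenPosMeasure] [IsFiniteMeasureOnCompacts μ]
    (x : X) {r : ℝ} (hr : 0 < r) : 0 < μ.real (ball x r) :=
  ENNReal.toReal_pos (measure_ball_pos μ x hr).ne' measure_ball_lt_top.ne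

theorem MeasureTheory.Measure.setIntegral_ball_comp_add_smul {E F : Type*}
    [NormedAddCommGroup E] [NormedSpace ℝ E] [FiniteDimensional ℝ E] [MeasurableSpace E]
    [BorelSpace E] [NormedAddCommGroup F] [NormedSpace ℝ F] (μ : Measure E)
    [μ.IsAddHaarMeasure] (f : E → F) (c : E) {r : ℝ} (hr : 0 < r) :
    ∫ x in ball 0 1, f (c + r • x) ∂μ = μ.real (ball 0 1) • ⨍ y in ball c r, f y ∂μ := by
  have htranslate := (measurePreserving_add_left μ c).setIntegral_preimage_emb
    (measurableEmbedding_addLeft c) f (ball c r)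
  rw [show (c + ·) ⁻¹' ball c r = ball 0 r by simp [preimage_add_ball]] at htranslate
  rw [setIntegral_comp_smul_of_pos μ (fun y => f (c + y)) _ hr, smul_unitBall_of_pos hr,
    htranslate, setAverage_eq, measureReal_def μ (ball c r), addHaar_ball_of_pos μ c hr,
    ENNReal.toReal_mul, ENNReal.toReal_ofReal (by positivity), ← measureReal_def, smul_smul]
  have := (measureReal_ball_pos μ (0 : E) one_pos).ne'
  congr 1
  field_simp

namespace MvPolynomial

theorem eval_bind₁ {σ τ R : Type*} [CommSemiring R] (v : τ → R) (g : σ → MvPolynomial τ R)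
    (P : MvPolynomial σ R) : eval v (bind₁ g P) = eval (fun i => eval v (g i)) P :=
  eval₂Hom_bind₁ (RingHom.id R) v g P

theorem totalDegree_bind₁_le {σ τ R : Type*} [CommSemiring R]
    {g : σ → MvPolynomial τ R} {k : ℕ} (hg : ∀ i, (g i).totalDegree ≤ k)
    (P : MvPolynomial σ R) : (bind₁ g P).totalDegree ≤ P.totalDegree * k := by
  conv_lhs => rw [P.as_sum, map_sum]
  refine (totalDegree_finsetSum _ _).trans (Finset.sup_le fun m hm => ?_)
  rw [bind₁_monomial]
  calc (C (coeff m P) * ∏ i ∈ m.support, g i ^ m i).totalDegree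
      ≤ ∑ i ∈ m.support, (g i ^ m i).totalDegree :=
        (totalDegree_mul _ _).trans <| by
          rw [totalDegree_C, zero_add]; exact totalDegree_finsetProd _ _
    _ ≤ ∑ i ∈ m.support, m i * k :=
        Finset.sum_le_sum fun i _ => (totalDegree_pow _ _).trans (Nat.mul_le_mul_left _ (hg i))
    _ ≤ P.totalDegree * k := by
        rw [← Finset.sum_mul]; exact Nat.mul_le_mul_right _ (le_totalDegree hm)

theorem totalDegree_bind₁_C_add_C_mul_X_le {σ R : Type*} [CommSemiring R] (a : σ → R)
    (b : R) (P : MvPolynomial σ R) :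
    (bind₁ (fun i => C (a i) + C b * X i) P).totalDegree ≤ P.totalDegree := by
  have hdeg_one (i : σ) : (C (a i) + C b * X i).totalDegree ≤ 1 :=
    (totalDegree_add _ _).trans <| max_le (by simp) <| by
      simpa [C_mul_X_eq_monomial] using totalDegree_monomial_le (Finsupp.single i 1) b
  simpa using totalDegree_bind₁_le hdeg_one P

theorem eq_zero_of_eqOn_zero {𝕜 σ : Type*} [RCLike 𝕜] [Fintype σ] {U : Set (σ → 𝕜)}
    (hU : IsOpen U) (hne : U.Nonempty) {Q : MvPolynomial σ 𝕜} (h : Set.EqOn (eval · Q) 0 U) :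
    Q = 0 := by
  obtain ⟨x, hx⟩ := hne
  have hzero := (AnalyticOnNhd.eval_mvPolynomial Q).eqOn_zero_of_preconnected_of_eventuallyEq_zero
    isPreconnected_univ (Set.mem_univ x) (h.eventuallyEq_of_mem (hU.mem_nhds hx))
  exact MvPolynomial.funext fun v => by simpa using hzero (Set.mem_univ v)

section EuclideanSpace

variable {n : ℕ}

theorem continuous_eval_ofLp (Q : MvPolynomial (Fin n) ℝ) :
    Continuous fun x : EuclideanSpace ℝ (Fin n) => eval x.ofLp Q :=
  Q.continuous_eval.comp (PiLp.continuous_ofLp 2 _)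

theorem eval_ofLp_bind₁_C_add_C_mul_X (P : MvPolynomial (Fin n) ℝ)
    (c x : EuclideanSpace ℝ (Fin n)) (r : ℝ) :
    eval x.ofLp (bind₁ (fun i => C (c i) + C r * X i) P) = eval (c + r • x).ofLp P :=
  (eval_bind₁ _ _ P).trans (congrArg (eval · P) (by ext i; simp))

theorem integrableOn_eval_ofLp (Q : MvPolynomial (Fin n) ℝ) {U : Set (EuclideanSpace ℝ (Fin n))}
    (hU : Bornology.IsBounded U) : IntegrableOn (fun x => eval x.ofLp Q) U :=
  (Q.continuous_eval_ofLp.continuousOn.integrableOn_compact hU.isCompact_closure).mono_set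
    subset_closure

noncomputable def evalToContinuousMap (K : Set (EuclideanSpace ℝ (Fin n))) :
    MvPolynomial (Fin n) ℝ →ₗ[ℝ] C(K, ℝ) where
  toFun Q := ⟨fun x => eval x.1.ofLp Q, Q.continuous_eval_ofLp.comp continuous_subtype_val⟩
  map_add' P Q := by ext; simp
  map_smul' a Q := by ext; simp

noncomputable def evalToL1 {U : Set (EuclideanSpace ℝ (Fin n))} (hU : Bornology.IsBounded U) :
    MvPolynomial (Fin n) ℝ →ₗ[ℝ] Lp ℝ 1 (volume.restrict U) where
  toFun Q := (Q.integrableOn_eval_ofLp hU).toL1 _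
  map_add' P Q := by simp_rw [map_add]; exact Integrable.toL1_add _ _ _ _
  map_smul' a Q := by
    simp_rw [smul_eval]; exact Integrable.toL1_smul _ (Q.integrableOn_eval_ofLp hU) a

theorem norm_evalToL1 {U : Set (EuclideanSpace ℝ (Fin n))} (hU : Bornology.IsBounded U)
    (Q : MvPolynomial (Fin n) ℝ) : ‖evalToL1 hU Q‖ = ∫ x in U, |eval x.ofLp Q| :=
  L1.norm_of_fun_eq_integral_norm (Q.integrableOn_eval_ofLp hU)

theorem evalToL1_injective {U : Set (EuclideanSpace ℝ (Fin n))} (hU : IsOpen U)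
    (hne : U.Nonempty) (hb : Bornology.IsBounded U) : Function.Injective (evalToL1 hb) := by
  refine (injective_iff_map_eq_zero _).mpr fun Q hQ => ?_
  have hae : (fun x => eval x.ofLp Q) =ᵐ[volume.restrict U] 0 := by
    rw [← Integrable.toL1_eq_toL1_iff _ _ (Q.integrableOn_eval_ofLp hb) (integrable_zero _ _ _)]
    exact hQ
  have hzero : Set.EqOn (fun x => eval x.ofLp Q) 0 U :=
    Measure.eqOn_open_of_ae_eq hae hU Q.continuous_eval_ofLp.continuousOn continuousOn_const
  obtain ⟨x, hx⟩ := hne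
  exact eq_zero_of_eqOn_zero (hU.preimage (PiLp.continuous_toLp 2 _)) ⟨x.ofLp, by simpa using hx⟩
    fun v hv => hzero hv

theorem exists_abs_eval_le_mul_setIntegral {U : Set (EuclideanSpace ℝ (Fin n))} (hU : IsOpen U)
    (hne : U.Nonempty) (hb : Bornology.IsBounded U) (d : ℕ) :
    ∃ C > 0, ∀ Q : MvPolynomial (Fin n) ℝ, Q.totalDegree ≤ d →
      ∀ x ∈ U, |eval x.ofLp Q| ≤ C * ∫ y in U, |eval y.ofLp Q| := by
  have : CompactSpace (closure U) := isCompact_iff_compactSpace.mp hb.isCompact_closure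
  obtain ⟨C, hC, hbound⟩ := LinearMap.exists_norm_le_mul_norm_of_injective
    ((evalToContinuousMap (closure U)).domRestrict (restrictTotalDegree (Fin n) ℝ d))
    ((evalToL1 hb).domRestrict _)
    ((evalToL1_injective hU hne hb).comp Subtype.val_injective)
  refine ⟨C, hC, fun Q hQ x hx => ?_⟩
  calc |eval x.ofLp Q| = ‖evalToContinuousMap (closure U) Q ⟨x, subset_closure hx⟩‖ := rfl
    _ ≤ ‖evalToContinuousMap (closure U) Q‖ := ContinuousMap.norm_coe_le_norm _ _
    _ ≤ C * ‖evalToL1 hb Q‖ := hbound ⟨Q, (mem_restrictTotalDegree _ _ _).mpr hQ⟩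
    _ = C * ∫ y in U, |eval y.ofLp Q| := by rw [norm_evalToL1]

end EuclideanSpace

end MvPolynomial

theorem polynomial_rh_infty_general {n : ℕ} (P : MvPolynomial (Fin n) ℝ)
    (hP0 : ∀ x : EuclideanSpace ℝ (Fin n), 0 ≤ MvPolynomial.eval (fun i => x i) P) :
    ∃ C : ℝ, 0 < C ∧ ∀ (c : EuclideanSpace ℝ (Fin n)) (r : ℝ), 0 < r →
      ∀ᵐ x ∂(volume.restrict (ball c r)),
        MvPolynomial.eval (fun i => x i) P ≤
          C * ⨍ y in ball c r, MvPolynomial.eval (fun i => y i) P := by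
  obtain ⟨K, hK, hbound⟩ := exists_abs_eval_le_mul_setIntegral
    (U := ball (0 : EuclideanSpace ℝ (Fin n)) 1) isOpen_ball ⟨0, mem_ball_self one_pos⟩
    isBounded_ball P.totalDegree
  refine ⟨K * volume.real (ball (0 : EuclideanSpace ℝ (Fin n)) 1),
    mul_pos hK (measureReal_ball_pos volume 0 one_pos),
    fun c r hr => ae_restrict_of_forall_mem measurableSet_ball fun y hy => ?_⟩
  set Q := bind₁ (fun i => C (c i) + C r * X i) P
  have hQ x := eval_ofLp_bind₁_C_add_C_mul_X P c x r
  obtain ⟨x, hx, rfl⟩ : ∃ x ∈ ball 0 1, c + r • x = y := by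
    have : y - c ∈ r • ball 0 1 := by
      rwa [smul_unitBall_of_pos hr, mem_ball_zero_iff, ← dist_eq_norm]
    obtain ⟨x, hx, hxy⟩ := this
    exact ⟨x, hx, eq_sub_iff_add_eq'.mp hxy⟩
  calc eval (c + r • x).ofLp P = eval x.ofLp Q := (hQ x).symm
    _ ≤ |eval x.ofLp Q| := le_abs_self _
    _ ≤ K * ∫ z in ball (0 : EuclideanSpace ℝ (Fin n)) 1, |eval z.ofLp Q| :=
        hbound Q (totalDegree_bind₁_C_add_C_mul_X_le _ r P) x hx
    _ = K * ∫ z in ball (0 : EuclideanSpace ℝ (Fin n)) 1, eval (c + r • z).ofLp P := by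
        refine congrArg (K * ·) (setIntegral_congr_fun measurableSet_ball fun z _ => ?_)
        rw [hQ, abs_of_nonneg (hP0 _)]
    _ = K * volume.real (ball (0 : EuclideanSpace ℝ (Fin n)) 1) *
          ⨍ z in ball c r, eval z.ofLp P := by
        rw [Measure.setIntegral_ball_comp_add_smul volume (fun z => eval z.ofLp P) c hr,
          smul_eq_mul, mul_assoc]

/-- Every positive polynomial (nonnegative and not identically zero) on `ℝⁿ`
belongs to `RH_∞`. -/
theorem polynomial_rh_infty {n : ℕ} (P : MvPolynomial (Fin n) ℝ)
    (hP0 : ∀ x : EuclideanSpace ℝ (Fin n), 0 ≤ MvPolynomial.eval (fun i => x i) P)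
    (hPne : P ≠ 0) :
    ∃ C : ℝ, 0 < C ∧ ∀ (c : EuclideanSpace ℝ (Fin n)) (r : ℝ), 0 < r →
      ∀ᵐ x ∂(volume.restrict (ball c r)),
        MvPolynomial.eval (fun i => x i) P ≤
          C * ⨍ y in ball c r, MvPolynomial.eval (fun i => y i) P :=
  polynomial_rh_infty_general P hP0
end

section
/- Rearrangement–maximal function comparison: On a doubling metric measure space, the decreasing rearrangement (Mf)* of the uncentered Hardy–Littlewood maximal function satisfies (Mf)*(t) ≤ C f**(t) for all t > 0, where f**(t) = t^{-1}∫₀^t f*(s) ds, with C depending only on the doubling constant. -/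
open MeasureTheory Metric ENNReal NNReal

/-!
Split `|f|` at the height `λ = f*(t)`: `|f| ≤ h + λ` with `h = |f| · 1_{|f| > λ}`, so `Mf ≤ Mh + λ`.
The set `{|f| > λ}` has measure at most `t`, and comparing the layer-cake formulas for `h` and for
`f*` on `(0, t)` gives `‖h‖₁ ≤ ∫₀ᵗ f*`. The Vitali covering lemma and the doubling condition give the
weak type (1,1) bound `μ {Mh > a} ≤ Cd³ ‖h‖₁ / a`; with `a = Cd³ ‖h‖₁ / t` this yields
`(Mf)*(t) ≤ a + λ`, and finally `λ = f*(t) ≤ f**(t)`.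
-/

/-- Decreasing rearrangement of an `ℝ≥0∞`-valued function with respect to `μ`. -/
noncomputable def rearrE {X : Type*} [MeasurableSpace X] (μ : Measure X)
    (h : X → ℝ≥0∞) (t : ℝ) : ℝ≥0∞ :=
  sInf {l : ℝ≥0∞ | μ {x | l < h x} ≤ ENNReal.ofReal t}

/-- The uncentered Hardy–Littlewood maximal function, with values in `ℝ≥0∞`. -/
noncomputable def maximalFn {X : Type*} [MetricSpace X] [MeasurableSpace X]
    (μ : Measure X) (f : X → ℝ) (x : X) : ℝ≥0∞ :=
  ⨆ (c : X) (r : ℝ) (_ : x ∈ ball c r),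
    (μ (ball c r))⁻¹ * ∫⁻ y in ball c r, ‖f y‖₊ ∂μ

open Set Filter Topology

theorem ENNReal.div_div_le (a b : ℝ≥0∞) : a / (a / b) ≤ b := by
  obtain rfl | h0 := eq_or_ne a 0
  · simp
  obtain rfl | htop := eq_or_ne a ∞
  · obtain rfl | hb := eq_or_ne b ∞
    · exact le_top
    · simp [top_div_of_ne_top hb]
  exact (ENNReal.div_div_cancel h0 htop).le

theorem volume_restrict_Ioi_zero_ofReal_lt (a : ℝ≥0∞) :
    volume.restrict (Ioi (0 : ℝ)) {l | ENNReal.ofReal l < a} = a := by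
  rw [Measure.restrict_apply' measurableSet_Ioi]
  rcases eq_or_ne a ∞ with rfl | ha
  · simp
  · have : {l : ℝ | ENNReal.ofReal l < a} ∩ Ioi 0 = Ioo 0 a.toReal := by
      ext l
      simp only [mem_inter_iff, mem_ofPred_eq, mem_Ioi, mem_Ioo]
      exact ⟨fun ⟨h, hl⟩ => ⟨hl, (ofReal_lt_iff_lt_toReal hl.le ha).1 h⟩,
        fun ⟨hl, h⟩ => ⟨(ofReal_lt_iff_lt_toReal hl.le ha).2 h, hl⟩⟩
    rw [this, Real.volume_Ioo, sub_zero, ofReal_toReal ha]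

theorem lintegral_eq_lintegral_meas_ofReal_lt {α : Type*} [MeasurableSpace α] {ν : Measure α}
    [SFinite ν] {F : α → ℝ≥0∞} (hF : Measurable F) :
    ∫⁻ a, F a ∂ν = ∫⁻ l in Ioi 0, ν {a | ENNReal.ofReal l < F a} := by
  have hS : MeasurableSet {p : α × ℝ | ENNReal.ofReal p.2 < F p.1} :=
    measurableSet_lt (by fun_prop) (hF.comp measurable_fst)
  calc ∫⁻ a, F a ∂ν = ∫⁻ a, volume.restrict (Ioi 0) {l | ENNReal.ofReal l < F a} ∂ν := by
        simp only [volume_restrict_Ioi_zero_ofReal_lt]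
    _ = (ν.prod (volume.restrict (Ioi 0))) {p | ENNReal.ofReal p.2 < F p.1} :=
        (Measure.prod_apply hS).symm
    _ = _ := Measure.prod_apply_symm hS

section Rearrangement

variable {X : Type*} [MeasurableSpace X] {μ : Measure X} {h : X → ℝ≥0∞} {t : ℝ} {l : ℝ≥0∞}

theorem rearrE_le_of_measure_le (hl : μ {x | l < h x} ≤ ENNReal.ofReal t) : rearrE μ h t ≤ l :=
  sInf_le hl

theorem measure_lt_le_of_rearrE_le (hl : rearrE μ h t ≤ l) :
    μ {x | l < h x} ≤ ENNReal.ofReal t := by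
  rcases eq_or_ne l ∞ with rfl | hl_top
  · simp
  obtain ⟨u, hu_anti, hu_mem, hu_lim⟩ := exists_seq_strictAnti_tendsto' hl_top.lt_top
  have hunion : {x | l < h x} = ⋃ n, {x | u n < h x} := by
    ext x
    simp only [mem_ofPred_eq, mem_iUnion]
    exact ⟨fun hx => (hu_lim.eventually (gt_mem_nhds hx)).exists,
      fun ⟨n, hn⟩ => (hu_mem n).1.trans hn⟩
  have hmono : Monotone fun n => {x | u n < h x} :=
    fun m n hmn x hx => (hu_anti.antitone hmn).trans_lt hx
  rw [hunion, hmono.measure_iUnion]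
  refine iSup_le fun n => ?_
  obtain ⟨l', hl', hl'u⟩ := sInf_lt_iff.1 (hl.trans_lt (hu_mem n).1)
  exact (measure_mono fun x hx => hl'u.trans hx).trans hl'

theorem rearrE_antitone (μ : Measure X) (h : X → ℝ≥0∞) : Antitone (rearrE μ h) :=
  fun _ _ hst => sInf_le_sInf fun _ hl => hl.trans (ofReal_le_ofReal hst)

theorem rearrE_le_inv_mul_setLIntegral (ht : 0 < t) :
    rearrE μ h t ≤ (ENNReal.ofReal t)⁻¹ * ∫⁻ s in Ioo 0 t, rearrE μ h s := by
  have hT : ENNReal.ofReal t ≠ 0 := ofReal_ne_zero_iff.2 ht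
  calc rearrE μ h t = (ENNReal.ofReal t)⁻¹ * ∫⁻ _ in Ioo 0 t, rearrE μ h t := by
        rw [setLIntegral_const, Real.volume_Ioo, sub_zero, mul_comm, mul_assoc,
          ENNReal.mul_inv_cancel hT ofReal_ne_top, mul_one]
    _ ≤ _ := by
      gcongr 1
      exact setLIntegral_mono' measurableSet_Ioo fun s hs => rearrE_antitone μ h hs.2.le

theorem min_measure_le_volume_lt_rearrE :
    min (μ {x | l < h x}) (ENNReal.ofReal t) ≤
      volume.restrict (Ioo 0 t) {s | l < rearrE μ h s} := by
  set d := min (μ {x | l < h x}) (ENNReal.ofReal t)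
  have hd : d ≠ ∞ := ne_top_of_le_ne_top ofReal_ne_top (min_le_right _ _)
  have hsub : Ioo 0 d.toReal ⊆ {s | l < rearrE μ h s} ∩ Ioo 0 t := by
    intro s ⟨hs0, hsd⟩
    have hs : ENNReal.ofReal s < d := (ofReal_lt_iff_lt_toReal hs0.le hd).2 hsd
    refine ⟨?_, hs0, ?_⟩
    · by_contra! hle
      rw [mem_ofPred_eq, not_lt] at hle
      exact (measure_lt_le_of_rearrE_le hle).not_gt (hs.trans_le (min_le_left _ _))
    · exact (ofReal_lt_ofReal_iff'.1 (hs.trans_le (min_le_right _ _))).1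
  calc d = volume (Ioo 0 d.toReal) := by rw [Real.volume_Ioo, sub_zero, ofReal_toReal hd]
    _ ≤ _ := by
      rw [Measure.restrict_apply' measurableSet_Ioo]
      exact measure_mono hsub

theorem setLIntegral_lt_rearrE_le (hh : Measurable h) :
    ∫⁻ x in {x | rearrE μ h t < h x}, h x ∂μ ≤ ∫⁻ s in Ioo 0 t, rearrE μ h s := by
  set S := {x | rearrE μ h t < h x}
  have hS : μ S ≤ ENNReal.ofReal t := measure_lt_le_of_rearrE_le le_rfl
  -- `μ` need not be s-finite, but the layer-cake formula only sees its finite restriction to `S`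
  have : IsFiniteMeasure (μ.restrict S) :=
    ⟨by simpa only [Measure.restrict_apply_univ] using hS.trans_lt ofReal_lt_top⟩
  rw [lintegral_eq_lintegral_meas_ofReal_lt hh,
    lintegral_eq_lintegral_meas_ofReal_lt (rearrE_antitone μ h).measurable]
  refine lintegral_mono fun l => ?_
  calc μ.restrict S {x | ENNReal.ofReal l < h x}
      ≤ min (μ {x | ENNReal.ofReal l < h x}) (ENNReal.ofReal t) :=
        le_min (Measure.restrict_le_self _)
          ((measure_mono (subset_univ _)).trans_eq (Measure.restrict_apply_univ S) |>.trans hS)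
    _ ≤ _ := min_measure_le_volume_lt_rearrE

end Rearrangement

section Averages

variable {X : Type*} [MeasurableSpace X] {μ : Measure X} {h : X → ℝ≥0∞}

theorem measure_le_inv_mul_setLIntegral_of_lt {s : Set X} {a : ℝ≥0∞}
    (ha : a < (μ s)⁻¹ * ∫⁻ y in s, h y ∂μ) : μ s ≤ a⁻¹ * ∫⁻ y in s, h y ∂μ := by
  have hpos : ∫⁻ y in s, h y ∂μ ≠ 0 := by
    rintro hzero
    simp [hzero] at ha
  rw [mul_comm, ← div_eq_mul_inv, ENNReal.le_div_iff_mul_le (Or.inr hpos) (Or.inl ha.ne_top)]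
  calc μ s * a ≤ μ s * ((μ s)⁻¹ * ∫⁻ y in s, h y ∂μ) := by gcongr
    _ = μ s * (μ s)⁻¹ * ∫⁻ y in s, h y ∂μ := (mul_assoc _ _ _).symm
    _ ≤ 1 * ∫⁻ y in s, h y ∂μ := by gcongr; exact ENNReal.mul_inv_le_one _
    _ = _ := one_mul _

theorem tsum_setLIntegral_le_lintegral {ι : Type*} {s : ι → Set X}
    (hs : ∀ i, MeasurableSet (s i)) (hd : Pairwise (Function.onFun Disjoint s)) :
    ∑' i, ∫⁻ x in s i, h x ∂μ ≤ ∫⁻ x, h x ∂μ := by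
  simp_rw [← withDensity_apply _ (hs _)]
  calc ∑' i, μ.withDensity h (s i) ≤ μ.withDensity h (⋃ i, s i) :=
        tsum_meas_le_meas_iUnion_of_disjoint _ hs hd
    _ ≤ μ.withDensity h univ := measure_mono (subset_univ _)
    _ = ∫⁻ x, h x ∂μ := by rw [withDensity_apply _ MeasurableSet.univ, Measure.restrict_univ]

end Averages

noncomputable def maximalFnE {X : Type*} [PseudoMetricSpace X] [MeasurableSpace X]
    (μ : Measure X) (h : X → ℝ≥0∞) (x : X) : ℝ≥0∞ :=
  ⨆ (c : X) (r : ℝ) (_ : x ∈ ball c r), (μ (ball c r))⁻¹ * ∫⁻ y in ball c r, h y ∂μ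

section MaximalFunction

variable {X : Type*} [PseudoMetricSpace X] [MeasurableSpace X] {μ : Measure X}

theorem maximalFnE_mono {g h : X → ℝ≥0∞} (hgh : g ≤ h) : maximalFnE μ g ≤ maximalFnE μ h :=
  fun _ => iSup₂_mono fun _ _ => iSup_mono fun _ => by gcongr; exact hgh _

theorem maximalFnE_add_const_le (h : X → ℝ≥0∞) (a : ℝ≥0∞) (x : X) :
    maximalFnE μ (fun y => h y + a) x ≤ maximalFnE μ h x + a := by
  refine iSup₂_le fun c r => iSup_le fun hx => ?_
  rw [lintegral_add_right _ measurable_const, setLIntegral_const, mul_add]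
  gcongr
  · exact le_iSup₂_of_le c r (le_iSup_of_le hx le_rfl)
  · calc (μ (ball c r))⁻¹ * (a * μ (ball c r)) = a * ((μ (ball c r))⁻¹ * μ (ball c r)) := by ring
      _ ≤ a * 1 := by gcongr; exact ENNReal.inv_mul_le_one _
      _ = a := mul_one a

theorem measure_ball_two_pow_mul_le {Cd : ℝ≥0∞}
    (hdoub : ∀ (x : X) (r : ℝ), 0 < r → μ (ball x (2 * r)) ≤ Cd * μ (ball x r))
    (n : ℕ) (x : X) {r : ℝ} (hr : 0 < r) : μ (ball x (2 ^ n * r)) ≤ Cd ^ n * μ (ball x r) := by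
  induction n with
  | zero => simp
  | succ n ih =>
    calc μ (ball x (2 ^ (n + 1) * r)) = μ (ball x (2 * (2 ^ n * r))) := by ring_nf
      _ ≤ Cd * μ (ball x (2 ^ n * r)) := hdoub x _ (by positivity)
      _ ≤ Cd * (Cd ^ n * μ (ball x r)) := by gcongr
      _ = Cd ^ (n + 1) * μ (ball x r) := by ring

variable [OpensMeasurableSpace X] {K : ℝ≥0∞} {h : X → ℝ≥0∞} {a : ℝ≥0∞}

theorem measure_biUnion_ball_le_of_lt_average
    (hK : ∀ (c : X) (r : ℝ), 0 < r → μ (ball c (8 * r)) ≤ K * μ (ball c r))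
    (hfin : ∫⁻ x, h x ∂μ ≠ ∞) {T : Set (X × ℝ)} {R : ℝ}
    (hR : ∀ p ∈ T, 0 < p.2 ∧ p.2 ≤ R)
    (hT : ∀ p ∈ T, a < (μ (ball p.1 p.2))⁻¹ * ∫⁻ y in ball p.1 p.2, h y ∂μ) :
    μ (⋃ p ∈ T, ball p.1 p.2) ≤ K * a⁻¹ * ∫⁻ x, h x ∂μ := by
  obtain ⟨u, huT, hdisj, hcov⟩ := Vitali.exists_disjoint_subfamily_covering_enlargement_closedBall
    T Prod.fst Prod.snd R (fun p hp => (hR p hp).2) 4 (by norm_num)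
  have hsum : ∑' p : u, ∫⁻ y in ball p.1.1 p.1.2, h y ∂μ ≤ ∫⁻ x, h x ∂μ :=
    tsum_setLIntegral_le_lintegral (fun _ => measurableSet_ball) fun p q hpq =>
      (hdisj p.2 q.2 (Subtype.coe_ne_coe.2 hpq)).mono ball_subset_closedBall ball_subset_closedBall
  have hu : u.Countable := by
    have hpos : ∀ p : u, ∫⁻ y in ball p.1.1 p.1.2, h y ∂μ ≠ 0 := fun p hzero => by
      simpa [hzero] using hT p (huT p.2)
    rw [← countable_coe_iff, ← countable_univ_iff, ← Function.support_eq_univ hpos]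
    exact Summable.countable_support_ennreal (ne_top_of_le_ne_top hfin hsum)
  have hcover : ⋃ p ∈ T, ball p.1 p.2 ⊆ ⋃ p ∈ u, ball p.1 (8 * p.2) := by
    refine iUnion₂_subset fun p hp x hx => ?_
    obtain ⟨q, hqu, hpq⟩ := hcov p hp
    exact mem_biUnion hqu (closedBall_subset_ball (by linarith [(hR q (huT hqu)).1])
      (hpq (ball_subset_closedBall hx)))
  calc μ (⋃ p ∈ T, ball p.1 p.2) ≤ μ (⋃ p ∈ u, ball p.1 (8 * p.2)) := measure_mono hcover
    _ ≤ ∑' p : u, μ (ball p.1.1 (8 * p.1.2)) := measure_biUnion_le μ hu _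
    _ ≤ ∑' p : u, K * a⁻¹ * ∫⁻ y in ball p.1.1 p.1.2, h y ∂μ := by
      gcongr with p
      rw [mul_assoc]
      exact (hK _ _ (hR p (huT p.2)).1).trans
        (by gcongr; exact measure_le_inv_mul_setLIntegral_of_lt (hT p (huT p.2)))
    _ = K * a⁻¹ * ∑' p : u, ∫⁻ y in ball p.1.1 p.1.2, h y ∂μ := ENNReal.tsum_mul_left
    _ ≤ K * a⁻¹ * ∫⁻ x, h x ∂μ := by gcongr

theorem measure_lt_maximalFnE_le
    (hK : ∀ (c : X) (r : ℝ), 0 < r → μ (ball c (8 * r)) ≤ K * μ (ball c r))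
    (hfin : ∫⁻ x, h x ∂μ ≠ ∞) (a : ℝ≥0∞) :
    μ {x | a < maximalFnE μ h x} ≤ K * a⁻¹ * ∫⁻ x, h x ∂μ := by
  set T : ℕ → Set (X × ℝ) := fun n => {p | 0 < p.2 ∧ p.2 ≤ n ∧
    a < (μ (ball p.1 p.2))⁻¹ * ∫⁻ y in ball p.1 p.2, h y ∂μ}
  have hmono : Monotone fun n => ⋃ p ∈ T n, ball p.1 p.2 := fun m n hmn =>
    biUnion_subset_biUnion_left fun p ⟨hp0, hpm, hpa⟩ =>
      ⟨hp0, hpm.trans (Nat.cast_le.2 hmn), hpa⟩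
  have hsub : {x | a < maximalFnE μ h x} ⊆ ⋃ n, ⋃ p ∈ T n, ball p.1 p.2 := by
    intro x hx
    simp only [maximalFnE, mem_ofPred_eq, lt_iSup_iff] at hx
    obtain ⟨c, r, hxr, hlt⟩ := hx
    obtain ⟨n, hn⟩ := exists_nat_ge r
    exact mem_iUnion.2 ⟨n, mem_biUnion (x := (c, r)) ⟨pos_of_mem_ball hxr, hn, hlt⟩ hxr⟩
  calc μ {x | a < maximalFnE μ h x} ≤ μ (⋃ n, ⋃ p ∈ T n, ball p.1 p.2) := measure_mono hsub
    _ = ⨆ n, μ (⋃ p ∈ T n, ball p.1 p.2) := hmono.measure_iUnion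
    _ ≤ _ := iSup_le fun n => measure_biUnion_ball_le_of_lt_average hK hfin
      (fun _ hp => ⟨hp.1, hp.2.1⟩) fun _ hp => hp.2.2

theorem rearrE_maximalFnE_le
    (hK : ∀ (c : X) (r : ℝ), 0 < r → μ (ball c (8 * r)) ≤ K * μ (ball c r))
    {g : X → ℝ≥0∞} (hg : Measurable g) {t : ℝ} (ht : 0 < t) :
    rearrE μ (maximalFnE μ g) t ≤
      (1 + K) * (ENNReal.ofReal t)⁻¹ * ∫⁻ s in Ioo 0 t, rearrE μ g s := by
  set T := ENNReal.ofReal t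
  set I := ∫⁻ s in Ioo 0 t, rearrE μ g s
  set lam := rearrE μ g t
  have hT : T ≠ 0 := ofReal_ne_zero_iff.2 ht
  obtain hI | hI := eq_or_ne I ∞
  · simp [hI, T]
  have hlam : lam ≤ T⁻¹ * I := rearrE_le_inv_mul_setLIntegral ht
  have hlam_top : lam ≠ ∞ := ne_top_of_le_ne_top (mul_ne_top (inv_ne_top.2 hT) hI) hlam
  set S := {x | lam < g x}
  set J := ∫⁻ x in S, g x ∂μ
  have hS : MeasurableSet S := measurableSet_lt measurable_const hg
  have hJ : J ≤ I := setLIntegral_lt_rearrE_le hg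
  have hMg (x : X) : maximalFnE μ g x ≤ maximalFnE μ (S.indicator g) x + lam := by
    refine (maximalFnE_mono (fun y => ?_) x).trans (maximalFnE_add_const_le _ _ x)
    by_cases hy : y ∈ S
    · simp [indicator_of_mem hy]
    · rw [indicator_of_notMem hy, zero_add]
      exact not_lt.1 hy
  set a := K * J / T with ha
  have hweak : μ {x | a < maximalFnE μ (S.indicator g) x} ≤ T := by
    have hJ_eq : ∫⁻ x, S.indicator g x ∂μ = J := lintegral_indicator hS g
    calc μ {x | a < maximalFnE μ (S.indicator g) x}
        ≤ K * a⁻¹ * ∫⁻ x, S.indicator g x ∂μ :=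
          measure_lt_maximalFnE_le hK (hJ_eq ▸ ne_top_of_le_ne_top hI hJ) a
      _ = K * J / a := by rw [hJ_eq, div_eq_mul_inv]; ring
      _ ≤ T := ENNReal.div_div_le _ _
  calc rearrE μ (maximalFnE μ g) t ≤ a + lam := by
        refine rearrE_le_of_measure_le ((measure_mono fun x hx => ?_).trans hweak)
        exact (ENNReal.add_lt_add_iff_right hlam_top).1 (hx.trans_le (hMg x))
    _ ≤ K * (T⁻¹ * I) + T⁻¹ * I := by
        gcongr
        calc a = K * (T⁻¹ * J) := by rw [ha, div_eq_mul_inv]; ring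
          _ ≤ K * (T⁻¹ * I) := by gcongr
    _ = (1 + K) * T⁻¹ * I := by ring

end MaximalFunction

theorem maximalFn_eq_maximalFnE {X : Type*} [MetricSpace X] [MeasurableSpace X]
    (μ : Measure X) (f : X → ℝ) : maximalFn μ f = maximalFnE μ (fun x => ‖f x‖₊) :=
  rfl

/-- Rearrangement–maximal function comparison on a doubling metric measure space:
`(Mf)*(t) ≤ C f**(t)` for all `t > 0`, where `f**(t) = t⁻¹ ∫₀^t f*(s) ds`, with `C`
depending only on the doubling constant. -/
theorem rearrangement_maximal {X : Type*} [MetricSpace X] [MeasurableSpace X]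
    [BorelSpace X] (μ : Measure X)
    (Cd : ℝ≥0) (hdoub : ∀ (x : X) (r : ℝ), 0 < r → μ (ball x (2 * r)) ≤ Cd * μ (ball x r)) :
    ∃ C : ℝ, 0 < C ∧ ∀ f : X → ℝ, Measurable f → ∀ t : ℝ, 0 < t →
      rearrE μ (maximalFn μ f) t ≤
        ENNReal.ofReal C * (ENNReal.ofReal t)⁻¹ *
          ∫⁻ s in Set.Ioo 0 t, rearrE μ (fun x => (‖f x‖₊ : ℝ≥0∞)) s := by
  have hdoub8 (x : X) (r : ℝ) (hr : 0 < r) :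
      μ (ball x (8 * r)) ≤ (Cd : ℝ≥0∞) ^ 3 * μ (ball x r) := by
    simpa [show (2 : ℝ) ^ 3 = 8 by norm_num] using measure_ball_two_pow_mul_le hdoub 3 x hr
  refine ⟨((1 + Cd ^ 3 : ℝ≥0) : ℝ), by positivity, fun f hf t ht => ?_⟩
  rw [ENNReal.ofReal_coe_nnreal, maximalFn_eq_maximalFnE]
  push_cast
  exact rearrE_maximalFnE_le hdoub8 hf.nnnorm.coe_nnreal_ennreal ht
end
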